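/- Let q be odd and χ a nontrivial character of (F_q,+). For (x,y,t) ∈ H(W), W = F_q^{2n}, define the operator ρ(x,y,t) on the q^n-dimensional space of functions f : F_q^n → ℂ by (ρ(x,y,t)f)(u) = χ(t + x·u − ½ x·y)·f(u − y). Then ρ is a group homomorphism from H(W) into the invertible operators on this space, and the resulting (Schrödinger model) representation is irreducible with central character χ. -/

import Mathlib

/-!
The operators are a representation because the phase identity
`½⟨w,w'⟩ + (x+x')·u − ½(x+x')·(y+y') = (x·u − ½x·y) + (x'·(u−y) − ½x'·y')` holds once `2` is
invertible, which is where `q` odd enters. For irreducibility, averaging the modulations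
`f ↦ χ(x·u) f(u)` against `χ(−x·u₀)` over `x ∈ F^n` sends any `f`, by orthogonality of the
characters `x ↦ χ(v·x)`, to `q^n f(u₀) δ_{u₀}`. So an invariant subspace containing some `f ≠ 0`
contains a point mass, hence all its translates `δ_a`, which span the whole space.
-/

open Matrix

set_option linter.unusedSectionVars false

namespace Stmt2

/-- The standard symplectic form on `W = F^n × F^n`:
`⟨(x,y),(x',y')⟩ = x·y' − y·x'`. -/
def symp {F : Type} [Field F] {n : ℕ} (u v : (Fin n → F) × (Fin n → F)) : F :=
  u.1 ⬝ᵥ v.2 - u.2 ⬝ᵥ v.1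

/-- The Heisenberg group `H(W) = W ⊕ F` attached to `W = F^n × F^n`, with
product `(w,t)·(w',t') = (w + w', t + t' + ½⟨w,w'⟩)`. -/
@[ext]
structure Heis (F : Type) [Field F] (n : ℕ) where
  w : (Fin n → F) × (Fin n → F)
  t : F

namespace Heis

variable {F : Type} [Field F] {n : ℕ}

instance : Mul (Heis F n) :=
  ⟨fun a b => ⟨a.w + b.w, a.t + b.t + (2 : F)⁻¹ * symp a.w b.w⟩⟩

instance : One (Heis F n) := ⟨⟨0, 0⟩⟩

instance : Inv (Heis F n) := ⟨fun a => ⟨-a.w, -a.t⟩⟩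

lemma mul_w (a b : Heis F n) : (a * b).w = a.w + b.w := rfl
lemma mul_t (a b : Heis F n) : (a * b).t = a.t + b.t + (2 : F)⁻¹ * symp a.w b.w := rfl
lemma one_w : (1 : Heis F n).w = 0 := rfl
lemma one_t : (1 : Heis F n).t = 0 := rfl
lemma inv_w (a : Heis F n) : (a⁻¹).w = -a.w := rfl
lemma inv_t (a : Heis F n) : (a⁻¹).t = -a.t := rfl

lemma symp_self (u : (Fin n → F) × (Fin n → F)) : symp u u = 0 := by
  simp [symp, dotProduct_comm]

instance : Group (Heis F n) where
  mul_assoc a b c := by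
    refine Heis.ext ?_ ?_
    · simp [mul_w, add_assoc]
    · simp only [mul_t, mul_w, symp, Prod.fst_add, Prod.snd_add,
        add_dotProduct, dotProduct_add]
      ring
  one_mul a := by
    refine Heis.ext ?_ ?_
    · simp [mul_w, one_w]
    · simp [mul_t, one_w, one_t, symp]
  mul_one a := by
    refine Heis.ext ?_ ?_
    · simp [mul_w, one_w]
    · simp [mul_t, one_w, one_t, symp]
  inv_mul_cancel a := by
    refine Heis.ext ?_ ?_
    · simp [mul_w, inv_w, one_w]
    · have h : symp (-a.w) a.w = 0 := by
        simp only [symp, Prod.fst_neg, Prod.snd_neg, neg_dotProduct]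
        rw [dotProduct_comm]
        ring
      simp [mul_t, inv_w, inv_t, one_t, h]

end Heis

/-- A representation `ρ` of the Heisenberg group has central character `χ` if
the central element `(0,t)` acts by the scalar `χ t`. -/
def HasCentralChar {F : Type} [Field F] {n : ℕ} {V : Type} [AddCommGroup V] [Module ℂ V]
    (ρ : Representation ℂ (Heis F n) V) (χ : AddChar F ℂ) : Prop :=
  ∀ t : F, ∀ v : V, ρ ⟨0, t⟩ v = χ t • v

/-- Irreducibility of a representation: the space is nonzero, and the only
invariant subspaces are `⊥` and `⊤`. -/
def IsIrred {G : Type} [Group G] {V : Type} [AddCommGroup V] [Module ℂ V]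
    (ρ : Representation ℂ G V) : Prop :=
  (∃ v : V, v ≠ 0) ∧
    ∀ p : Submodule ℂ V, (∀ g : G, ∀ v ∈ p, ρ g v ∈ p) → p = ⊥ ∨ p = ⊤

/-- The Schrödinger-model operator attached to `h = (x,y,t) ∈ H(W)`:
`(ρ(x,y,t) f)(u) = χ(t + x·u − ½ x·y) · f(u − y)`. -/
noncomputable def schrodinger {F : Type} [Field F] {n : ℕ} (χ : AddChar F ℂ)
    (h : Heis F n) : ((Fin n → F) → ℂ) →ₗ[ℂ] ((Fin n → F) → ℂ) where
  toFun f := fun u => χ (h.t + h.w.1 ⬝ᵥ u - (2 : F)⁻¹ * (h.w.1 ⬝ᵥ h.w.2)) * f (u - h.w.2)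
  map_add' := by
    intro f g
    funext u
    simp [mul_add]
  map_smul' := by
    intro c f
    funext u
    simp only [Pi.smul_apply, smul_eq_mul, RingHom.id_apply]
    ring

lemma FiniteField.two_ne_zero_of_odd_card {F : Type*} [Field F] [Fintype F]
    (hodd : Odd (Fintype.card F)) : (2 : F) ≠ 0 := by
  intro h2
  obtain ⟨k, hk⟩ := hodd
  have hcard := FiniteField.cast_card_eq_zero F
  rw [hk, Nat.cast_add, Nat.cast_mul, Nat.cast_ofNat, h2, zero_mul, zero_add,
    Nat.cast_one] at hcard
  exact one_ne_zero hcard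

lemma AddChar.sum_apply_dotProduct {F R ι : Type*} [Field F] [Fintype F] [CommRing R]
    [IsDomain R] [Fintype ι] [DecidableEq ι] [DecidableEq F]
    {χ : AddChar F R} (hχ : χ ≠ 1) (v : ι → F) :
    ∑ x : ι → F, χ (v ⬝ᵥ x) = if v = 0 then (Fintype.card (ι → F) : R) else 0 := by
  split_ifs with hv
  · simp [hv]
  obtain ⟨i, hi⟩ := Function.ne_iff.mp hv
  obtain ⟨c, hc⟩ := AddChar.ne_one_iff.mp hχ
  let ψ : AddChar (ι → F) R :=
    χ.compAddMonoidHom (AddMonoidHom.mk' (v ⬝ᵥ ·) (dotProduct_add v))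
  have hψ : ψ ≠ 1 := AddChar.ne_one_iff.mpr ⟨Pi.single i ((v i)⁻¹ * c), by
    simpa [ψ, dotProduct_single, mul_inv_cancel_left₀ hi] using hc⟩
  exact AddChar.sum_eq_zero_of_ne_one hψ

section Schrodinger

variable {F : Type} [Field F] {n : ℕ} (χ : AddChar F ℂ)

lemma schrodinger_apply (h : Heis F n) (f : (Fin n → F) → ℂ) (u : Fin n → F) :
    schrodinger χ h f u
      = χ (h.t + h.w.1 ⬝ᵥ u - (2 : F)⁻¹ * (h.w.1 ⬝ᵥ h.w.2)) * f (u - h.w.2) := rfl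

lemma schrodinger_one : schrodinger χ (1 : Heis F n) = 1 := by
  ext f u
  simp [schrodinger_apply, Heis.one_w, Heis.one_t]

lemma schrodinger_mul (h2 : (2 : F) ≠ 0) (a b : Heis F n) :
    schrodinger χ (a * b) = schrodinger χ a * schrodinger χ b := by
  ext f u
  simp only [Module.End.mul_apply, schrodinger_apply, Heis.mul_w, Heis.mul_t, ← mul_assoc,
    ← AddChar.map_add_eq_mul, Prod.fst_add, Prod.snd_add, sub_add_eq_sub_sub]
  congr 2
  simp only [symp, add_dotProduct, dotProduct_add, dotProduct_sub, dotProduct_comm a.w.2 b.w.1]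
  field_simp
  ring

noncomputable def schrodingerRep (h2 : (2 : F) ≠ 0) :
    Representation ℂ (Heis F n) ((Fin n → F) → ℂ) where
  toFun := schrodinger χ
  map_one' := schrodinger_one χ
  map_mul' := schrodinger_mul χ h2

lemma schrodinger_center (t : F) (f : (Fin n → F) → ℂ) : schrodinger χ ⟨0, t⟩ f = χ t • f := by
  ext u
  simp [schrodinger_apply]

lemma schrodinger_translate_single [DecidableEq F] (y a : Fin n → F) :
    schrodinger χ ⟨(0, y), 0⟩ (Pi.single a 1) = Pi.single (a + y) 1 := by
  ext u
  simp [schrodinger_apply, Pi.single_apply, sub_eq_iff_eq_add]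

lemma schrodinger_modulate (x : Fin n → F) (f : (Fin n → F) → ℂ) :
    schrodinger χ ⟨(x, 0), 0⟩ f = fun u => χ (x ⬝ᵥ u) * f u := by
  ext u
  simp [schrodinger_apply]

lemma sum_smul_schrodinger_modulate [Fintype F] [DecidableEq F] (hχ : χ ≠ 1)
    (f : (Fin n → F) → ℂ) (u₀ : Fin n → F) :
    ∑ x : Fin n → F, χ (-(x ⬝ᵥ u₀)) • schrodinger χ ⟨(x, 0), 0⟩ f
      = ((Fintype.card (Fin n → F) : ℂ) * f u₀) • Pi.single u₀ 1 := by
  ext u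
  have hterm (x : Fin n → F) :
      χ (-(x ⬝ᵥ u₀)) * (χ (x ⬝ᵥ u) * f u) = χ ((u - u₀) ⬝ᵥ x) * f u := by
    rw [← mul_assoc, ← AddChar.map_add_eq_mul, sub_dotProduct, dotProduct_comm u,
      dotProduct_comm u₀, neg_add_eq_sub]
  simp only [Finset.sum_apply, Pi.smul_apply, schrodinger_modulate, smul_eq_mul, hterm,
    ← Finset.sum_mul, AddChar.sum_apply_dotProduct hχ, sub_eq_zero, Pi.single_apply]
  split_ifs with h <;> simp [h]

variable [Fintype F] [DecidableEq F] {χ} {p : Submodule ℂ ((Fin n → F) → ℂ)}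

lemma single_mem_of_schrodinger_invariant (hχ : χ ≠ 1)
    (hp : ∀ g : Heis F n, ∀ v ∈ p, schrodinger χ g v ∈ p) (hp₀ : p ≠ ⊥) (a : Fin n → F) :
    Pi.single a 1 ∈ p := by
  obtain ⟨f, hf, hf₀⟩ := (Submodule.ne_bot_iff p).mp hp₀
  obtain ⟨u₀, hu₀⟩ := Function.ne_iff.mp hf₀
  have hsingle : Pi.single u₀ 1 ∈ p := by
    have hc : (Fintype.card (Fin n → F) : ℂ) * f u₀ ≠ 0 :=
      mul_ne_zero (Nat.cast_ne_zero.mpr Fintype.card_ne_zero) hu₀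
    rw [← Submodule.smul_mem_iff p hc, ← sum_smul_schrodinger_modulate χ hχ]
    exact Submodule.sum_mem p fun x _ => p.smul_mem _ (hp _ f hf)
  simpa [schrodinger_translate_single] using hp ⟨(0, a - u₀), 0⟩ _ hsingle

lemma eq_bot_or_eq_top_of_schrodinger_invariant (hχ : χ ≠ 1)
    (hp : ∀ g : Heis F n, ∀ v ∈ p, schrodinger χ g v ∈ p) : p = ⊥ ∨ p = ⊤ := by
  refine or_iff_not_imp_left.mpr fun hp₀ => ?_
  rw [eq_top_iff, ← (Pi.basisFun ℂ (Fin n → F)).span_eq, Submodule.span_le]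
  rintro _ ⟨a, rfl⟩
  simpa using single_mem_of_schrodinger_invariant hχ hp hp₀ a

end Schrodinger

/-- the Schrödinger operators define a homomorphism from
`H(W)` into the invertible operators, and the resulting representation is
irreducible with central character `χ`. -/
theorem schrodinger_model
    (F : Type) [Field F] [Fintype F] (hodd : Odd (Fintype.card F))
    (n : ℕ) (χ : AddChar F ℂ) (hχ : χ ≠ 1) :
    ∃ ρ : Representation ℂ (Heis F n) ((Fin n → F) → ℂ),
      (∀ h : Heis F n, ρ h = schrodinger χ h) ∧
      IsIrred ρ ∧ HasCentralChar ρ χ := by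
  classical
  refine ⟨schrodingerRep χ (FiniteField.two_ne_zero_of_odd_card hodd), fun _ => rfl,
    ⟨⟨1, one_ne_zero⟩, fun p hp => eq_bot_or_eq_top_of_schrodinger_invariant hχ hp⟩,
    schrodinger_center χ⟩

end Stmt2
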